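/- arXiv:2506.19048 — 2 statements merged into one kernel-verified Lean document; each statement's English description precedes it below -/
import Mathlib

section
/- Let s ∈ (0,1), n ≥ 1, Ω ⊂ ℝⁿ a bounded domain, and let E = {E₋₁, E₀, E₁} be admissible. Let A ⊆ (E₁ ∪ E₋₁) ∩ Ω be measurable and define Ẽ₋₁ = E₋₁ ∩ Aᶜ, Ẽ₁ = E₁ ∩ Aᶜ, Ẽ₀ = E₀ ∪ A. If F^s(E, Ω) < ∞ and F^s(Ẽ, Ω) < ∞, then all the L^s-terms below are finite and F^s(E, Ω) − F^s(Ẽ, Ω) = σ_{−1,0}[L^s(E₋₁∩A, E₋₁ᶜ) − L^s(E₋₁∩A, E₋₁∩Aᶜ)] + σ_{0,1}[L^s(E₁∩A, E₁ᶜ) − L^s(E₁∩A, E₁∩Aᶜ)] − 2α₀[L^s(E₋₁∩A, E₁∩A) + L^s(E₋₁∩A, E₁∩Aᶜ) + L^s(E₁∩A, E₋₁∩Aᶜ)]. -/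
open MeasureTheory Filter ENNReal

/-- The nonlocal interaction `L^s(A,B) = ∫_A ∫_B |x-y|^{-(n+s)} dy dx ∈ [0,∞]`. -/
noncomputable def Ls (n : ℕ) (s : ℝ) (A B : Set (EuclideanSpace ℝ (Fin n))) : ℝ≥0∞ :=
  ∫⁻ x in A, ∫⁻ y in B, ENNReal.ofReal (1 / ‖x - y‖ ^ ((n : ℝ) + s))

/-- The nonlocal area `Per^s_Ω(A,B)`. -/
noncomputable def nlArea (n : ℕ) (s : ℝ) (Ω A B : Set (EuclideanSpace ℝ (Fin n))) : ℝ≥0∞ :=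
  Ls n s (A ∩ Ω) (B ∩ Ω) + Ls n s (A ∩ Ω) (B ∩ Ωᶜ) + Ls n s (A ∩ Ωᶜ) (B ∩ Ω)

/-- The fractional `s`-perimeter `Per^s_Ω(E) = Per^s_Ω(E, Eᶜ)`. -/
noncomputable def nlPer (n : ℕ) (s : ℝ) (Ω E : Set (EuclideanSpace ℝ (Fin n))) : ℝ≥0∞ :=
  nlArea n s Ω E Eᶜ

/-- An admissible triple (3-part partition of `ℝⁿ` up to null sets);
`Em`, `E0`, `E1` stand for `E₋₁`, `E₀`, `E₁`. -/
def Admissible (n : ℕ) (Em E0 E1 : Set (EuclideanSpace ℝ (Fin n))) : Prop :=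
  MeasurableSet Em ∧ MeasurableSet E0 ∧ MeasurableSet E1 ∧
  volume ((Em ∪ E0 ∪ E1)ᶜ) = 0 ∧
  volume (Em ∩ E0) = 0 ∧ volume (Em ∩ E1) = 0 ∧ volume (E0 ∩ E1) = 0

/-- The weighted nonlocal energy
`F^s(E,Ω) = σ_{-1,0} Per^s_Ω(E₋₁,E₀) + σ_{0,1} Per^s_Ω(E₀,E₁) + σ_{-1,1} Per^s_Ω(E₋₁,E₁)`. -/
noncomputable def Fs (n : ℕ) (s σm0 σ01 σm1 : ℝ)
    (Ω Em E0 E1 : Set (EuclideanSpace ℝ (Fin n))) : ℝ≥0∞ :=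
  ENNReal.ofReal σm0 * nlArea n s Ω Em E0 + ENNReal.ofReal σ01 * nlArea n s Ω E0 E1 +
    ENNReal.ofReal σm1 * nlArea n s Ω Em E1

/-!
Split the two outer phases along `A`: `E₋₁ = P ∪ M` and `E₁ = Q ∪ O` with `P = E₋₁ ∩ A`,
`Q = E₁ ∩ A`. Since `A ⊆ Ω`, every interaction of `P` or `Q` enters `Per^s_Ω` as a full `L^s`
term. Both energies therefore split into the common remainder
`σ₋₁₀ Per^s_Ω(M, E₀) + σ₀₁ Per^s_Ω(E₀, O) + σ₋₁₁ Per^s_Ω(M, O)` plus `L^s`-interactions among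
`P, Q, M, O, E₀`. As all weights are positive, finiteness of the energies makes each of these
terms finite, and expanding `L^s(P, E₋₁ᶜ)`, `L^s(Q, E₁ᶜ)` along the a.e. partition turns the
claimed formula into a linear identity between them.
-/
section Interaction

variable {n : ℕ} {s : ℝ} {Ω X Y Z : Set (EuclideanSpace ℝ (Fin n))}

lemma measurable_Ls_kernel (n : ℕ) (s : ℝ) :
    Measurable (Function.uncurry fun x y : EuclideanSpace ℝ (Fin n) =>
      ENNReal.ofReal (1 / ‖x - y‖ ^ ((n : ℝ) + s))) := by
  unfold Function.uncurry; fun_prop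

lemma Ls_comm (X Y : Set (EuclideanSpace ℝ (Fin n))) : Ls n s X Y = Ls n s Y X := by
  rw [Ls, Ls, lintegral_lintegral_swap (measurable_Ls_kernel n s).aemeasurable]
  simp only [norm_sub_rev]

@[simp]
lemma Ls_empty_left : Ls n s ∅ Y = 0 := by
  simp [Ls]

lemma Ls_union_left (hd : AEDisjoint volume X Y) (hY : NullMeasurableSet Y) :
    Ls n s (X ∪ Y) Z = Ls n s X Z + Ls n s Y Z := by
  rw [Ls, Ls, Ls, Measure.restrict_union₀ hd hY, lintegral_add_measure]

lemma Ls_union_right (hd : AEDisjoint volume X Y) (hY : NullMeasurableSet Y) :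
    Ls n s Z (X ∪ Y) = Ls n s Z X + Ls n s Z Y := by
  rw [Ls_comm, Ls_union_left hd hY, Ls_comm, Ls_comm Y]

lemma Ls_congr_right (h : Y =ᵐ[volume] Z) : Ls n s X Y = Ls n s X Z := by
  simp only [Ls, Measure.restrict_congr_set h]

lemma Ls_inter_add_inter_compl_right (hΩ : MeasurableSet Ω)
    (X Z : Set (EuclideanSpace ℝ (Fin n))) :
    Ls n s X (Z ∩ Ω) + Ls n s X (Z ∩ Ωᶜ) = Ls n s X Z := by
  rw [Ls, Ls, Ls, ← lintegral_add_left (measurable_Ls_kernel n s).lintegral_prod_right]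
  refine lintegral_congr fun x => ?_
  rw [← Set.sdiff_eq, ← lintegral_add_measure, Measure.restrict_inter_add_sdiff _ hΩ]

lemma nlArea_union_left (hΩ : MeasurableSet Ω) (hd : AEDisjoint volume X Y)
    (hY : NullMeasurableSet Y) :
    nlArea n s Ω (X ∪ Y) Z = nlArea n s Ω X Z + nlArea n s Ω Y Z := by
  have hdΩ : AEDisjoint volume (X ∩ Ω) (Y ∩ Ω) :=
    hd.mono Set.inter_subset_left Set.inter_subset_left
  have hdΩc : AEDisjoint volume (X ∩ Ωᶜ) (Y ∩ Ωᶜ) :=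
    hd.mono Set.inter_subset_left Set.inter_subset_left
  have hYΩ := hY.inter hΩ.nullMeasurableSet
  have hYΩc := hY.inter hΩ.compl.nullMeasurableSet
  simp only [nlArea, Set.union_inter_distrib_right]
  rw [Ls_union_left hdΩ hYΩ, Ls_union_left hdΩ hYΩ, Ls_union_left hdΩc hYΩc]
  ring

lemma nlArea_comm : nlArea n s Ω X Y = nlArea n s Ω Y X := by
  simp only [nlArea, Ls_comm (X ∩ _)]
  ring

lemma nlArea_union_right (hΩ : MeasurableSet Ω) (hd : AEDisjoint volume X Y)
    (hY : NullMeasurableSet Y) :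
    nlArea n s Ω Z (X ∪ Y) = nlArea n s Ω Z X + nlArea n s Ω Z Y := by
  rw [nlArea_comm, nlArea_union_left hΩ hd hY, nlArea_comm, nlArea_comm (Y := Y)]

lemma nlArea_of_subset_left (hΩ : MeasurableSet Ω) (hX : X ⊆ Ω) :
    nlArea n s Ω X Z = Ls n s X Z := by
  rw [nlArea, Set.inter_eq_left.2 hX, ← Set.sdiff_eq (s := X), Set.sdiff_eq_empty.2 hX,
    Ls_inter_add_inter_compl_right hΩ, Ls_empty_left, add_zero]

lemma nlArea_of_subset_right (hΩ : MeasurableSet Ω) (hY : Y ⊆ Ω) :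
    nlArea n s Ω X Y = Ls n s X Y := by
  rw [nlArea_comm, nlArea_of_subset_left hΩ hY, Ls_comm]

end Interaction

section Configuration

variable {n : ℕ} {s : ℝ} {Ω A X Y Z Em E0 E1 : Set (EuclideanSpace ℝ (Fin n))}

lemma nlArea_split_left (hΩ : MeasurableSet Ω) (hA : MeasurableSet A) (hAΩ : A ⊆ Ω)
    (hX : MeasurableSet X) :
    nlArea n s Ω X Z = Ls n s (X ∩ A) Z + nlArea n s Ω (X ∩ Aᶜ) Z := by
  conv_lhs => rw [← Set.inter_union_compl X A]
  have hd : Disjoint (X ∩ A) (X ∩ Aᶜ) :=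
    disjoint_compl_right.mono Set.inter_subset_right Set.inter_subset_right
  rw [nlArea_union_left hΩ hd.aedisjoint (hX.inter hA.compl).nullMeasurableSet,
    nlArea_of_subset_left hΩ (Set.inter_subset_right.trans hAΩ)]

lemma nlArea_split_right (hΩ : MeasurableSet Ω) (hA : MeasurableSet A) (hAΩ : A ⊆ Ω)
    (hY : MeasurableSet Y) :
    nlArea n s Ω Z Y = Ls n s Z (Y ∩ A) + nlArea n s Ω Z (Y ∩ Aᶜ) := by
  rw [nlArea_comm, nlArea_split_left hΩ hA hAΩ hY, nlArea_comm, Ls_comm]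

lemma Ls_split_of_subset_union (hA : MeasurableSet A) (hY : MeasurableSet Y)
    (hAXY : A ⊆ X ∪ Y) (hXY : AEDisjoint volume X Y) :
    Ls n s A Z = Ls n s (X ∩ A) Z + Ls n s (Y ∩ A) Z := by
  conv_lhs => rw [← Set.inter_eq_right.2 hAXY, Set.union_inter_distrib_right]
  exact Ls_union_left (hXY.mono Set.inter_subset_left Set.inter_subset_left)
    (hY.inter hA).nullMeasurableSet

lemma compl_ae_eq_union {α : Type*} [MeasurableSpace α] {μ : Measure α} {X Y Z : Set α}
    (hcov : μ (X ∪ Y ∪ Z)ᶜ = 0) (hXY : μ (X ∩ Y) = 0) (hXZ : μ (X ∩ Z) = 0) :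
    (Xᶜ : Set α) =ᵐ[μ] (Y ∪ Z : Set α) := by
  refine ae_eq_set.2 ⟨measure_mono_null (fun x hx => ?_) hcov,
    measure_mono_null (fun x hx => ?_) (measure_union_null hXY hXZ)⟩
  · simp only [Set.mem_sdiff, Set.mem_compl_iff, Set.mem_union] at hx ⊢
    tauto
  · simp only [Set.mem_sdiff, Set.mem_compl_iff, Set.mem_union, Set.mem_inter_iff] at hx ⊢
    tauto

lemma Ls_compl_eq_add (hcov : volume (X ∪ Y ∪ Z)ᶜ = 0) (hXY : volume (X ∩ Y) = 0)
    (hXZ : volume (X ∩ Z) = 0) (hYZ : AEDisjoint volume Y Z) (hZ : MeasurableSet Z)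
    (W : Set (EuclideanSpace ℝ (Fin n))) :
    Ls n s W Xᶜ = Ls n s W Y + Ls n s W Z := by
  rw [Ls_congr_right (compl_ae_eq_union hcov hXY hXZ), Ls_union_right hYZ hZ.nullMeasurableSet]

end Configuration

section Energy

variable {n : ℕ} {s : ℝ} {Ω A Em E0 E1 : Set (EuclideanSpace ℝ (Fin n))}

lemma Fs_eq_split (σm0 σ01 σm1 : ℝ) (hΩ : MeasurableSet Ω) (hA : MeasurableSet A)
    (hAΩ : A ⊆ Ω) (hEm : MeasurableSet Em) (hE1 : MeasurableSet E1) :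
    Fs n s σm0 σ01 σm1 Ω Em E0 E1 =
      ENNReal.ofReal σm0 * (Ls n s (Em ∩ A) E0 + nlArea n s Ω (Em ∩ Aᶜ) E0) +
      ENNReal.ofReal σ01 * (Ls n s E0 (E1 ∩ A) + nlArea n s Ω E0 (E1 ∩ Aᶜ)) +
      ENNReal.ofReal σm1 * (Ls n s (Em ∩ A) (E1 ∩ A) + Ls n s (Em ∩ A) (E1 ∩ Aᶜ) +
        Ls n s (E1 ∩ A) (Em ∩ Aᶜ) + nlArea n s Ω (Em ∩ Aᶜ) (E1 ∩ Aᶜ)) := by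
  rw [Fs, nlArea_split_left hΩ hA hAΩ hEm (Z := E0), nlArea_split_right hΩ hA hAΩ hE1 (Z := E0),
    nlArea_split_left hΩ hA hAΩ hEm (Z := E1), nlArea_split_right hΩ hA hAΩ hE1 (Z := Em ∩ Aᶜ),
    ← Ls_inter_add_inter_compl_right hA (Em ∩ A) E1, Ls_comm (Em ∩ Aᶜ) (E1 ∩ A)]
  ring

lemma Fs_absorb_eq_split (σm0 σ01 σm1 : ℝ) (hΩ : MeasurableSet Ω) (hA : MeasurableSet A)
    (hAΩ : A ⊆ Ω) (hAE : A ⊆ E1 ∪ Em) (hEm : MeasurableSet Em)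
    (hm0 : volume (Em ∩ E0) = 0) (hm1 : volume (Em ∩ E1) = 0) (h01 : volume (E0 ∩ E1) = 0) :
    Fs n s σm0 σ01 σm1 Ω (Em ∩ Aᶜ) (E0 ∪ A) (E1 ∩ Aᶜ) =
      ENNReal.ofReal σm0 * (nlArea n s Ω (Em ∩ Aᶜ) E0 +
        (Ls n s (E1 ∩ A) (Em ∩ Aᶜ) + Ls n s (Em ∩ A) (Em ∩ Aᶜ))) +
      ENNReal.ofReal σ01 * (nlArea n s Ω E0 (E1 ∩ Aᶜ) +
        (Ls n s (E1 ∩ A) (E1 ∩ Aᶜ) + Ls n s (Em ∩ A) (E1 ∩ Aᶜ))) +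
      ENNReal.ofReal σm1 * nlArea n s Ω (Em ∩ Aᶜ) (E1 ∩ Aᶜ) := by
  have h0A : AEDisjoint volume E0 A := by
    refine measure_mono_null (fun x ⟨h0, hxA⟩ => ?_) (measure_union_null h01 hm0)
    rcases hAE hxA with h1 | hm
    exacts [Or.inl ⟨h0, h1⟩, Or.inr ⟨hm, h0⟩]
  have h1m : AEDisjoint volume E1 Em := by rwa [AEDisjoint, Set.inter_comm]
  rw [Fs, nlArea_union_right hΩ h0A hA.nullMeasurableSet,
    nlArea_union_left hΩ h0A hA.nullMeasurableSet, nlArea_of_subset_right hΩ hAΩ,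
    nlArea_of_subset_left hΩ hAΩ, Ls_comm _ A, Ls_split_of_subset_union hA hEm hAE h1m,
    Ls_split_of_subset_union hA hEm hAE h1m]

end Energy

lemma ofReal_mul_ne_top_iff {σ : ℝ} (hσ : 0 < σ) {x : ℝ≥0∞} :
    ENNReal.ofReal σ * x ≠ ⊤ ↔ x ≠ ⊤ := by
  simp [ENNReal.mul_eq_top, hσ]

theorem energy_difference_two_sided_strip_general
    (n : ℕ) (s : ℝ)
    (Ω : Set (EuclideanSpace ℝ (Fin n))) (hΩo : IsOpen Ω)
    (σm0 σ01 σm1 : ℝ) (hσm0 : 0 < σm0) (hσ01 : 0 < σ01) (hσm1 : 0 < σm1)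
    (Em E0 E1 : Set (EuclideanSpace ℝ (Fin n))) (hadm : Admissible n Em E0 E1)
    (A : Set (EuclideanSpace ℝ (Fin n))) (hA : MeasurableSet A)
    (hAsub : A ⊆ (E1 ∪ Em) ∩ Ω)
    (hfin : Fs n s σm0 σ01 σm1 Ω Em E0 E1 ≠ ⊤)
    (hfin' : Fs n s σm0 σ01 σm1 Ω (Em ∩ Aᶜ) (E0 ∪ A) (E1 ∩ Aᶜ) ≠ ⊤) :
    Ls n s (Em ∩ A) Emᶜ ≠ ⊤ ∧ Ls n s (Em ∩ A) (Em ∩ Aᶜ) ≠ ⊤ ∧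
    Ls n s (E1 ∩ A) E1ᶜ ≠ ⊤ ∧ Ls n s (E1 ∩ A) (E1 ∩ Aᶜ) ≠ ⊤ ∧
    Ls n s (Em ∩ A) (E1 ∩ A) ≠ ⊤ ∧ Ls n s (Em ∩ A) (E1 ∩ Aᶜ) ≠ ⊤ ∧
    Ls n s (E1 ∩ A) (Em ∩ Aᶜ) ≠ ⊤ ∧
    (Fs n s σm0 σ01 σm1 Ω Em E0 E1).toReal -
        (Fs n s σm0 σ01 σm1 Ω (Em ∩ Aᶜ) (E0 ∪ A) (E1 ∩ Aᶜ)).toReal =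
      σm0 * ((Ls n s (Em ∩ A) Emᶜ).toReal - (Ls n s (Em ∩ A) (Em ∩ Aᶜ)).toReal) +
        σ01 * ((Ls n s (E1 ∩ A) E1ᶜ).toReal - (Ls n s (E1 ∩ A) (E1 ∩ Aᶜ)).toReal) -
        2 * ((σm0 + σ01 - σm1) / 2) *
          ((Ls n s (Em ∩ A) (E1 ∩ A)).toReal + (Ls n s (Em ∩ A) (E1 ∩ Aᶜ)).toReal +
            (Ls n s (E1 ∩ A) (Em ∩ Aᶜ)).toReal) := by
  obtain ⟨hEm, hE0, hE1, hcov, hm0, hm1, h01⟩ := hadm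
  obtain ⟨hAE, hAΩ⟩ := Set.subset_inter_iff.1 hAsub
  have hΩ := hΩo.measurableSet
  have hEmc : Ls n s (Em ∩ A) Emᶜ =
      Ls n s (Em ∩ A) E0 + (Ls n s (Em ∩ A) (E1 ∩ A) + Ls n s (Em ∩ A) (E1 ∩ Aᶜ)) := by
    rw [Ls_compl_eq_add hcov hm0 hm1 h01 hE1, Ls_inter_add_inter_compl_right hA]
  have hE1c : Ls n s (E1 ∩ A) E1ᶜ =
      Ls n s (E1 ∩ A) (Em ∩ A) + Ls n s (E1 ∩ A) (Em ∩ Aᶜ) + Ls n s (E1 ∩ A) E0 := by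
    have hcov' : volume (E1 ∪ Em ∪ E0)ᶜ = 0 := by rwa [Set.union_comm, ← Set.union_assoc] at hcov
    rw [Ls_compl_eq_add hcov' (by rwa [Set.inter_comm]) (by rwa [Set.inter_comm]) hm0 hE0,
      Ls_inter_add_inter_compl_right hA]
  rw [Fs_eq_split σm0 σ01 σm1 hΩ hA hAΩ hEm hE1] at hfin ⊢
  rw [Fs_absorb_eq_split σm0 σ01 σm1 hΩ hA hAΩ hAE hEm hm0 hm1 h01] at hfin' ⊢
  simp only [ENNReal.add_ne_top, ofReal_mul_ne_top_iff hσm0, ofReal_mul_ne_top_iff hσ01,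
    ofReal_mul_ne_top_iff hσm1] at hfin hfin'
  rw [hEmc, hE1c, Ls_comm (E1 ∩ A) (Em ∩ A), Ls_comm (E1 ∩ A) E0]
  obtain ⟨⟨⟨hPE0, hR1⟩, hE0Q, hR2⟩, ⟨⟨hPQ, hPO⟩, hQM⟩, hR3⟩ := hfin
  obtain ⟨⟨⟨-, -, hPM⟩, -, hQO, -⟩, -⟩ := hfin'
  refine ⟨by finiteness, hPM, by finiteness, hQO, hPQ, hPO, hQM, ?_⟩
  simp only [ENNReal.toReal_add, ENNReal.add_ne_top, ENNReal.mul_ne_top, ENNReal.ofReal_ne_top,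
    ENNReal.toReal_ofReal_mul _ _ hσm0.le, ENNReal.toReal_ofReal_mul _ _ hσ01.le,
    ENNReal.toReal_ofReal_mul _ _ hσm1.le, ne_eq, not_false_eq_true, and_self, *]
  ring

/-- Difference in energy when covering `A ⊆ (E₁ ∪ E₋₁) ∩ Ω` with phase `0`:
with `Ẽ₋₁ = E₋₁ ∩ Aᶜ`, `Ẽ₁ = E₁ ∩ Aᶜ`, `Ẽ₀ = E₀ ∪ A`, if both energies are finite then all
the interaction terms are finite and
`F^s(E) − F^s(Ẽ) = σ_{-1,0}[L(E₋₁∩A,E₋₁ᶜ) − L(E₋₁∩A,E₋₁∩Aᶜ)]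
 + σ_{0,1}[L(E₁∩A,E₁ᶜ) − L(E₁∩A,E₁∩Aᶜ)]
 − 2α₀[L(E₋₁∩A,E₁∩A) + L(E₋₁∩A,E₁∩Aᶜ) + L(E₁∩A,E₋₁∩Aᶜ)]`. -/
theorem energy_difference_two_sided_strip
    (n : ℕ) (hn : 1 ≤ n) (s : ℝ) (hs : s ∈ Set.Ioo (0 : ℝ) 1)
    (Ω : Set (EuclideanSpace ℝ (Fin n))) (hΩo : IsOpen Ω) (hΩconn : IsConnected Ω)
    (hΩb : Bornology.IsBounded Ω)
    (σm0 σ01 σm1 : ℝ) (hσm0 : 0 < σm0) (hσ01 : 0 < σ01) (hσm1 : 0 < σm1)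
    (Em E0 E1 : Set (EuclideanSpace ℝ (Fin n))) (hadm : Admissible n Em E0 E1)
    (A : Set (EuclideanSpace ℝ (Fin n))) (hA : MeasurableSet A)
    (hAsub : A ⊆ (E1 ∪ Em) ∩ Ω)
    (hfin : Fs n s σm0 σ01 σm1 Ω Em E0 E1 ≠ ⊤)
    (hfin' : Fs n s σm0 σ01 σm1 Ω (Em ∩ Aᶜ) (E0 ∪ A) (E1 ∩ Aᶜ) ≠ ⊤) :
    Ls n s (Em ∩ A) Emᶜ ≠ ⊤ ∧ Ls n s (Em ∩ A) (Em ∩ Aᶜ) ≠ ⊤ ∧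
    Ls n s (E1 ∩ A) E1ᶜ ≠ ⊤ ∧ Ls n s (E1 ∩ A) (E1 ∩ Aᶜ) ≠ ⊤ ∧
    Ls n s (Em ∩ A) (E1 ∩ A) ≠ ⊤ ∧ Ls n s (Em ∩ A) (E1 ∩ Aᶜ) ≠ ⊤ ∧
    Ls n s (E1 ∩ A) (Em ∩ Aᶜ) ≠ ⊤ ∧
    (Fs n s σm0 σ01 σm1 Ω Em E0 E1).toReal -
        (Fs n s σm0 σ01 σm1 Ω (Em ∩ Aᶜ) (E0 ∪ A) (E1 ∩ Aᶜ)).toReal =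
      σm0 * ((Ls n s (Em ∩ A) Emᶜ).toReal - (Ls n s (Em ∩ A) (Em ∩ Aᶜ)).toReal) +
        σ01 * ((Ls n s (E1 ∩ A) E1ᶜ).toReal - (Ls n s (E1 ∩ A) (E1 ∩ Aᶜ)).toReal) -
        2 * ((σm0 + σ01 - σm1) / 2) *
          ((Ls n s (Em ∩ A) (E1 ∩ A)).toReal + (Ls n s (Em ∩ A) (E1 ∩ Aᶜ)).toReal +
            (Ls n s (E1 ∩ A) (Em ∩ Aᶜ)).toReal) :=
  energy_difference_two_sided_strip_general n s Ω hΩo σm0 σ01 σm1 hσm0 hσ01 hσm1 Em E0 E1 hadm A hA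
    hAsub hfin hfin'
end

section
/- Let s ∈ (0,1), n ≥ 1, Ω ⊂ ℝⁿ a bounded domain, and let Ω' be an open set compactly contained in Ω. If E and F are admissible triples such that F_i ∩ (Ω')ᶜ = E_i ∩ (Ω')ᶜ up to Lebesgue-null sets for each i ∈ {−1,0,1}, then F^s(E, Ω) + F^s(F, Ω') = F^s(F, Ω) + F^s(E, Ω'), as an identity in [0,∞]. (Equivalently, when these energies are finite, F^s(E,Ω) − F^s(F,Ω) = F^s(E,Ω') − F^s(F,Ω').) -/
open MeasureTheory Filter ENNReal

lemma kernel_meas (n : ℕ) (s : ℝ) :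
    Measurable fun p : EuclideanSpace ℝ (Fin n) × EuclideanSpace ℝ (Fin n) =>
      ENNReal.ofReal (1 / ‖p.1 - p.2‖ ^ ((n : ℝ) + s)) := by measurability

lemma inner_meas (n : ℕ) (s : ℝ) (B : Set (EuclideanSpace ℝ (Fin n))) :
    Measurable fun x => ∫⁻ y in B, ENNReal.ofReal (1 / ‖x - y‖ ^ ((n : ℝ) + s)) :=
  Measurable.lintegral_prod_right (kernel_meas n s)

lemma Ls_congr {n : ℕ} {s : ℝ} {A A' B B' : Set (EuclideanSpace ℝ (Fin n))}
    (hA : A =ᵐ[volume] A') (hB : B =ᵐ[volume] B') : Ls n s A B = Ls n s A' B' := by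
  unfold Ls
  rw [setLIntegral_congr hA]
  exact lintegral_congr fun x => setLIntegral_congr hB

lemma Ls_union_left_s10 {n : ℕ} {s : ℝ} {A₁ A₂ B : Set (EuclideanSpace ℝ (Fin n))}
    (hA₂ : MeasurableSet A₂) (hd : Disjoint A₁ A₂) :
    Ls n s (A₁ ∪ A₂) B = Ls n s A₁ B + Ls n s A₂ B :=
  lintegral_union hA₂ hd

lemma Ls_union_right_s10 {n : ℕ} {s : ℝ} {A B₁ B₂ : Set (EuclideanSpace ℝ (Fin n))}
    (hB₂ : MeasurableSet B₂) (hd : Disjoint B₁ B₂) :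
    Ls n s A (B₁ ∪ B₂) = Ls n s A B₁ + Ls n s A B₂ := by
  unfold Ls
  rw [← lintegral_add_left (inner_meas n s B₁)]
  exact lintegral_congr fun x => lintegral_union hB₂ hd

lemma nlArea_split (n : ℕ) (s : ℝ) {Ω Ω' A B : Set (EuclideanSpace ℝ (Fin n))}
    (hΩ : MeasurableSet Ω) (hΩ' : MeasurableSet Ω') (hsub : Ω' ⊆ Ω)
    (hA : MeasurableSet A) (hB : MeasurableSet B) :
    nlArea n s Ω A B = nlArea n s Ω' A B
      + (Ls n s (A ∩ (Ω \ Ω')) (B ∩ (Ω \ Ω')) + Ls n s (A ∩ (Ω \ Ω')) (B ∩ Ωᶜ)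
        + Ls n s (A ∩ Ωᶜ) (B ∩ (Ω \ Ω'))) := by
  have hP2 : MeasurableSet (Ω \ Ω') := hΩ.diff hΩ'
  have hP3 : MeasurableSet Ωᶜ := hΩ.compl
  have d12 : Disjoint Ω' (Ω \ Ω') := disjoint_sdiff_self_right
  have d23 : Disjoint (Ω \ Ω') Ωᶜ := disjoint_compl_right.mono_left Set.diff_subset
  have dA12 : Disjoint (A ∩ Ω') (A ∩ (Ω \ Ω')) :=
    d12.mono Set.inter_subset_right Set.inter_subset_right
  have dB12 : Disjoint (B ∩ Ω') (B ∩ (Ω \ Ω')) :=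
    d12.mono Set.inter_subset_right Set.inter_subset_right
  have dA23 : Disjoint (A ∩ (Ω \ Ω')) (A ∩ Ωᶜ) :=
    d23.mono Set.inter_subset_right Set.inter_subset_right
  have dB23 : Disjoint (B ∩ (Ω \ Ω')) (B ∩ Ωᶜ) :=
    d23.mono Set.inter_subset_right Set.inter_subset_right
  have hΩeq : Ω = Ω' ∪ (Ω \ Ω') := (Set.union_diff_cancel hsub).symm
  have hAΩ : A ∩ Ω = (A ∩ Ω') ∪ (A ∩ (Ω \ Ω')) := by
    conv_lhs => rw [hΩeq]
    exact Set.inter_union_distrib_left ..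
  have hBΩ : B ∩ Ω = (B ∩ Ω') ∪ (B ∩ (Ω \ Ω')) := by
    conv_lhs => rw [hΩeq]
    exact Set.inter_union_distrib_left ..
  have hcompl : Ω'ᶜ = (Ω \ Ω') ∪ Ωᶜ := by
    ext x
    simp only [Set.mem_compl_iff, Set.mem_union, Set.mem_diff]
    by_cases hx : x ∈ Ω
    · simp [hx]
    · have : x ∉ Ω' := fun h => hx (hsub h)
      tauto
  have hAc : A ∩ Ω'ᶜ = (A ∩ (Ω \ Ω')) ∪ (A ∩ Ωᶜ) := by
    rw [hcompl, Set.inter_union_distrib_left]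
  have hBc : B ∩ Ω'ᶜ = (B ∩ (Ω \ Ω')) ∪ (B ∩ Ωᶜ) := by
    rw [hcompl, Set.inter_union_distrib_left]
  have T1 : Ls n s (A ∩ Ω) (B ∩ Ω)
      = Ls n s (A ∩ Ω') (B ∩ Ω') + Ls n s (A ∩ Ω') (B ∩ (Ω \ Ω'))
        + Ls n s (A ∩ (Ω \ Ω')) (B ∩ Ω') + Ls n s (A ∩ (Ω \ Ω')) (B ∩ (Ω \ Ω')) := by
    rw [hAΩ, hBΩ, Ls_union_left_s10 (hA.inter hP2) dA12,
      Ls_union_right_s10 (hB.inter hP2) dB12, Ls_union_right_s10 (hB.inter hP2) dB12]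
    ring
  have T2 : Ls n s (A ∩ Ω) (B ∩ Ωᶜ)
      = Ls n s (A ∩ Ω') (B ∩ Ωᶜ) + Ls n s (A ∩ (Ω \ Ω')) (B ∩ Ωᶜ) := by
    rw [hAΩ, Ls_union_left_s10 (hA.inter hP2) dA12]
  have T3 : Ls n s (A ∩ Ωᶜ) (B ∩ Ω)
      = Ls n s (A ∩ Ωᶜ) (B ∩ Ω') + Ls n s (A ∩ Ωᶜ) (B ∩ (Ω \ Ω')) := by
    rw [hBΩ, Ls_union_right_s10 (hB.inter hP2) dB12]
  have T4 : Ls n s (A ∩ Ω') (B ∩ Ω'ᶜ)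
      = Ls n s (A ∩ Ω') (B ∩ (Ω \ Ω')) + Ls n s (A ∩ Ω') (B ∩ Ωᶜ) := by
    rw [hBc, Ls_union_right_s10 (hB.inter hP3) dB23]
  have T5 : Ls n s (A ∩ Ω'ᶜ) (B ∩ Ω')
      = Ls n s (A ∩ (Ω \ Ω')) (B ∩ Ω') + Ls n s (A ∩ Ωᶜ) (B ∩ Ω') := by
    rw [hAc, Ls_union_left_s10 (hA.inter hP3) dA23]
  unfold nlArea
  rw [T1, T2, T3, T4, T5]
  ring

lemma pair_id (n : ℕ) (s : ℝ) {Ω Ω' A B A' B' : Set (EuclideanSpace ℝ (Fin n))}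
    (hΩ : MeasurableSet Ω) (hΩ' : MeasurableSet Ω') (hsub : Ω' ⊆ Ω)
    (hA : MeasurableSet A) (hB : MeasurableSet B)
    (hA' : MeasurableSet A') (hB' : MeasurableSet B')
    (hAe : (A' ∩ Ω'ᶜ : Set (EuclideanSpace ℝ (Fin n))) =ᵐ[volume] (A ∩ Ω'ᶜ : Set (EuclideanSpace ℝ (Fin n)))) (hBe : (B' ∩ Ω'ᶜ : Set (EuclideanSpace ℝ (Fin n))) =ᵐ[volume] (B ∩ Ω'ᶜ : Set (EuclideanSpace ℝ (Fin n)))) :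
    nlArea n s Ω A B + nlArea n s Ω' A' B' = nlArea n s Ω A' B' + nlArea n s Ω' A B := by
  have key : ∀ X X' : Set (EuclideanSpace ℝ (Fin n)),
      ((X ∩ Ω'ᶜ : Set (EuclideanSpace ℝ (Fin n))) =ᵐ[volume] (X' ∩ Ω'ᶜ : Set (EuclideanSpace ℝ (Fin n)))) → (X ∩ (Ω \ Ω') : Set (EuclideanSpace ℝ (Fin n))) =ᵐ[volume] (X' ∩ (Ω \ Ω') : Set (EuclideanSpace ℝ (Fin n))) := by
    intro X X' h
    have e : ∀ Z : Set (EuclideanSpace ℝ (Fin n)), Z ∩ (Ω \ Ω') = (Z ∩ Ω'ᶜ) ∩ Ω := by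
      intro Z; ext x; simp only [Set.mem_inter_iff, Set.mem_diff, Set.mem_compl_iff]; tauto
    rw [e X, e X']
    exact ae_eq_set_inter h (ae_eq_refl _)
  have key' : ∀ X X' : Set (EuclideanSpace ℝ (Fin n)),
      ((X ∩ Ω'ᶜ : Set (EuclideanSpace ℝ (Fin n))) =ᵐ[volume] (X' ∩ Ω'ᶜ : Set (EuclideanSpace ℝ (Fin n)))) → (X ∩ Ωᶜ : Set (EuclideanSpace ℝ (Fin n))) =ᵐ[volume] (X' ∩ Ωᶜ : Set (EuclideanSpace ℝ (Fin n))) := by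
    intro X X' h
    have e : ∀ Z : Set (EuclideanSpace ℝ (Fin n)), Z ∩ Ωᶜ = (Z ∩ Ω'ᶜ) ∩ Ωᶜ := by
      intro Z; ext x
      simp only [Set.mem_inter_iff, Set.mem_compl_iff]
      constructor
      · rintro ⟨h1, h2⟩; exact ⟨⟨h1, fun hh => h2 (hsub hh)⟩, h2⟩
      · rintro ⟨⟨h1, _⟩, h2⟩; exact ⟨h1, h2⟩
    rw [e X, e X']
    exact ae_eq_set_inter h (ae_eq_refl _)
  rw [nlArea_split n s hΩ hΩ' hsub hA hB, nlArea_split n s hΩ hΩ' hsub hA' hB']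
  have r1 : Ls n s (A' ∩ (Ω \ Ω')) (B' ∩ (Ω \ Ω'))
      = Ls n s (A ∩ (Ω \ Ω')) (B ∩ (Ω \ Ω')) :=
    Ls_congr (key A' A hAe) (key B' B hBe)
  have r2 : Ls n s (A' ∩ (Ω \ Ω')) (B' ∩ Ωᶜ) = Ls n s (A ∩ (Ω \ Ω')) (B ∩ Ωᶜ) :=
    Ls_congr (key A' A hAe) (key' B' B hBe)
  have r3 : Ls n s (A' ∩ Ωᶜ) (B' ∩ (Ω \ Ω')) = Ls n s (A ∩ Ωᶜ) (B ∩ (Ω \ Ω')) :=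
    Ls_congr (key' A' A hAe) (key B' B hBe)
  rw [r1, r2, r3]
  ring

/-- If `E` and `F` agree outside an open set `Ω'` compactly contained in `Ω` (up to null
sets), then `F^s(E,Ω) + F^s(F,Ω') = F^s(F,Ω) + F^s(E,Ω')`. -/
theorem energy_difference_localization
    (n : ℕ) (hn : 1 ≤ n) (s : ℝ) (hs : s ∈ Set.Ioo (0 : ℝ) 1)
    (Ω Ω' : Set (EuclideanSpace ℝ (Fin n))) (hΩo : IsOpen Ω) (hΩconn : IsConnected Ω)
    (hΩb : Bornology.IsBounded Ω) (hΩ'o : IsOpen Ω') (hΩ'Ω : closure Ω' ⊆ Ω)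
    (σm0 σ01 σm1 : ℝ) (hσm0 : 0 < σm0) (hσ01 : 0 < σ01) (hσm1 : 0 < σm1)
    (Em E0 E1 Fm F0 F1 : Set (EuclideanSpace ℝ (Fin n)))
    (hadmE : Admissible n Em E0 E1) (hadmF : Admissible n Fm F0 F1)
    (heqm : volume (symmDiff (Fm ∩ Ω'ᶜ) (Em ∩ Ω'ᶜ)) = 0)
    (heq0 : volume (symmDiff (F0 ∩ Ω'ᶜ) (E0 ∩ Ω'ᶜ)) = 0)
    (heq1 : volume (symmDiff (F1 ∩ Ω'ᶜ) (E1 ∩ Ω'ᶜ)) = 0) :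
    Fs n s σm0 σ01 σm1 Ω Em E0 E1 + Fs n s σm0 σ01 σm1 Ω' Fm F0 F1 =
      Fs n s σm0 σ01 σm1 Ω Fm F0 F1 + Fs n s σm0 σ01 σm1 Ω' Em E0 E1 := by
  obtain ⟨hEm, hE0, hE1, -, -, -, -⟩ := hadmE
  obtain ⟨hFm, hF0, hF1, -, -, -, -⟩ := hadmF
  have hsub : Ω' ⊆ Ω := subset_closure.trans hΩ'Ω
  have hΩm := hΩo.measurableSet
  have hΩ'm := hΩ'o.measurableSet
  have hm := (measure_symmDiff_eq_zero_iff).1 heqm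
  have h0 := (measure_symmDiff_eq_zero_iff).1 heq0
  have h1 := (measure_symmDiff_eq_zero_iff).1 heq1
  have P1 := pair_id n s hΩm hΩ'm hsub hEm hE0 hFm hF0 hm h0
  have P2 := pair_id n s hΩm hΩ'm hsub hE0 hE1 hF0 hF1 h0 h1
  have P3 := pair_id n s hΩm hΩ'm hsub hEm hE1 hFm hF1 hm h1
  have H1 : ENNReal.ofReal σm0 * nlArea n s Ω Em E0 + ENNReal.ofReal σm0 * nlArea n s Ω' Fm F0
      = ENNReal.ofReal σm0 * nlArea n s Ω Fm F0 + ENNReal.ofReal σm0 * nlArea n s Ω' Em E0 := by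
    rw [← mul_add, ← mul_add, P1]
  have H2 : ENNReal.ofReal σ01 * nlArea n s Ω E0 E1 + ENNReal.ofReal σ01 * nlArea n s Ω' F0 F1
      = ENNReal.ofReal σ01 * nlArea n s Ω F0 F1 + ENNReal.ofReal σ01 * nlArea n s Ω' E0 E1 := by
    rw [← mul_add, ← mul_add, P2]
  have H3 : ENNReal.ofReal σm1 * nlArea n s Ω Em E1 + ENNReal.ofReal σm1 * nlArea n s Ω' Fm F1
      = ENNReal.ofReal σm1 * nlArea n s Ω Fm F1 + ENNReal.ofReal σm1 * nlArea n s Ω' Em E1 := by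
    rw [← mul_add, ← mul_add, P3]
  unfold Fs
  calc ENNReal.ofReal σm0 * nlArea n s Ω Em E0 + ENNReal.ofReal σ01 * nlArea n s Ω E0 E1 +
        ENNReal.ofReal σm1 * nlArea n s Ω Em E1 +
      (ENNReal.ofReal σm0 * nlArea n s Ω' Fm F0 + ENNReal.ofReal σ01 * nlArea n s Ω' F0 F1 +
        ENNReal.ofReal σm1 * nlArea n s Ω' Fm F1)
      = (ENNReal.ofReal σm0 * nlArea n s Ω Em E0 + ENNReal.ofReal σm0 * nlArea n s Ω' Fm F0)
        + (ENNReal.ofReal σ01 * nlArea n s Ω E0 E1 + ENNReal.ofReal σ01 * nlArea n s Ω' F0 F1)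
        + (ENNReal.ofReal σm1 * nlArea n s Ω Em E1 + ENNReal.ofReal σm1 * nlArea n s Ω' Fm F1) := by
        ring
    _ = (ENNReal.ofReal σm0 * nlArea n s Ω Fm F0 + ENNReal.ofReal σm0 * nlArea n s Ω' Em E0)
        + (ENNReal.ofReal σ01 * nlArea n s Ω F0 F1 + ENNReal.ofReal σ01 * nlArea n s Ω' E0 E1)
        + (ENNReal.ofReal σm1 * nlArea n s Ω Fm F1 + ENNReal.ofReal σm1 * nlArea n s Ω' Em E1) := by
        rw [H1, H2, H3]
    _ = ENNReal.ofReal σm0 * nlArea n s Ω Fm F0 + ENNReal.ofReal σ01 * nlArea n s Ω F0 F1 +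
        ENNReal.ofReal σm1 * nlArea n s Ω Fm F1 +
      (ENNReal.ofReal σm0 * nlArea n s Ω' Em E0 + ENNReal.ofReal σ01 * nlArea n s Ω' E0 E1 +
        ENNReal.ofReal σm1 * nlArea n s Ω' Em E1) := by ring
end
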